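/- Define ζ : (0, 8/3] → [0,1) by ζ(κ) = z(κ) whenever cos(4π/κ) > 0, where z(κ) ∈ (0,1) is the unique solution of ₂F₁(4/κ, 12/κ−1, 8/κ; z) = 2cos(4π/κ) · ₂F₁(4/κ, 12/κ−1, 8/κ; 1−z), and ζ(κ) = 0 whenever cos(4π/κ) ≤ 0. Then limsup_{κ→0⁺} ζ(κ) = 1/2 and liminf_{κ→0⁺} ζ(κ) = 0. -/

import Mathlib

/-- Rising factorial (Pochhammer symbol) `(q)ₙ = q(q+1)⋯(q+n−1)`. -/
noncomputable def risingFac (q : ℝ) (n : ℕ) : ℝ := ∏ i ∈ Finset.range n, (q + (i : ℝ))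

/-- Gauss hypergeometric function `₂F₁(a,b,c;z)`, defined as the sum of its power series. -/
noncomputable def hyp2F1 (a b c z : ℝ) : ℝ :=
  ∑' n : ℕ, risingFac a n * risingFac b n / (risingFac c n * (Nat.factorial n : ℝ)) * z ^ n

/-- Conformal weight `h(κ) = (6−κ)/(2κ)`. -/
noncomputable def hParam (κ : ℝ) : ℝ := (6 - κ) / (2 * κ)

/-- Loop fugacity `ν(κ) = −2cos(4π/κ)`. -/
noncomputable def nuParam (κ : ℝ) : ℝ := -2 * Real.cos (4 * Real.pi / κ)

/-- Cross-ratio `χ = ((x₂−x₁)(x₄−x₃))/((x₃−x₁)(x₄−x₂))`. -/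
noncomputable def crossRatio (x₁ x₂ x₃ x₄ : ℝ) : ℝ :=
  ((x₂ - x₁) * (x₄ - x₃)) / ((x₃ - x₁) * (x₄ - x₂))

/-- Pure partition function `Z_a^(κ)` of multiple SLE_κ (N = 2). -/
noncomputable def Za (κ x₁ x₂ x₃ x₄ : ℝ) : ℝ :=
  (x₂ - x₁) ^ (-(2 * hParam κ)) * (x₄ - x₃) ^ (-(2 * hParam κ)) *
    (1 - crossRatio x₁ x₂ x₃ x₄) ^ (2 / κ) *
    (hyp2F1 (4/κ) (1 - 4/κ) (8/κ) (1 - crossRatio x₁ x₂ x₃ x₄) /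
      hyp2F1 (4/κ) (1 - 4/κ) (8/κ) 1)

/-- Pure partition function `Z_b^(κ)` of multiple SLE_κ (N = 2). -/
noncomputable def Zb (κ x₁ x₂ x₃ x₄ : ℝ) : ℝ :=
  (x₄ - x₁) ^ (-(2 * hParam κ)) * (x₃ - x₂) ^ (-(2 * hParam κ)) *
    (crossRatio x₁ x₂ x₃ x₄) ^ (2 / κ) *
    (hyp2F1 (4/κ) (1 - 4/κ) (8/κ) (crossRatio x₁ x₂ x₃ x₄) /
      hyp2F1 (4/κ) (1 - 4/κ) (8/κ) 1)

/-- The fused three-point function `Z₃^(κ)(ξ,x₃,x₄)`. -/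
noncomputable def Z3 (κ ξ x₃ x₄ : ℝ) : ℝ :=
  (x₄ - x₃) ^ (2/κ) * (x₃ - ξ) ^ (1 - 8/κ) * (x₄ - ξ) ^ (1 - 8/κ) /
    hyp2F1 (4/κ) (1 - 4/κ) (8/κ) 1

/-!
Write `F_a(z) = ₂F₁(a, 3a - 1, 2a; z)`, so that the equation for `ζ(κ)` reads
`F_a(z) = 2 cos(4π/κ) F_a(1 - z)` with `a = 4/κ → ∞`. The coefficients `c_n` of `F_a` are
increasing and satisfy `a c_n ≤ 2(n + 1) c_{n+1}`, so for `y < x` and any `N` the terms of index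
`< N` of `F_a(y)` are `O(N² c_N / a)` while the others are at most `(y/x)^N` times those of
`F_a(x)`; hence `F_a(x) / F_a(y) → ∞`. Since `F_a` is increasing, a root of
`F_a(z) = c F_a(1 - z)` with bounded `c` satisfies `z < 1/2 + ε` for large `a`. Applied to `ζ`,
and to `1 - ζ` along `κ = 4π/(2πm)` where the cosine is `1`, this gives `limsup ζ = 1/2`; along
`κ = 4π/(π + 2πm)` the cosine is `-1`, so `ζ = 0` there and `liminf ζ = 0`.
-/

open Filter Topology Set

lemma risingFac_succ (q : ℝ) (n : ℕ) : risingFac q (n + 1) = risingFac q n * (q + n) :=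
  Finset.prod_range_succ _ _

lemma risingFac_pos {q : ℝ} (hq : 0 < q) (n : ℕ) : 0 < risingFac q n :=
  Finset.prod_pos fun _ _ => by positivity

lemma risingFac_eq_ascPochhammer_eval (q : ℝ) (n : ℕ) :
    risingFac q n = (ascPochhammer ℝ n).eval q := by
  induction n with
  | zero => simp [risingFac]
  | succ n ih => rw [risingFac_succ, ih, ascPochhammer_succ_eval]

noncomputable def hyp2F1Coeff (a b c : ℝ) (n : ℕ) : ℝ :=
  risingFac a n * risingFac b n / (risingFac c n * (Nat.factorial n : ℝ))

lemma hyp2F1Coeff_zero (a b c : ℝ) : hyp2F1Coeff a b c 0 = 1 := by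
  simp [hyp2F1Coeff, risingFac]

-- No side condition is needed: if `c + n = 0`, both sides are junk `0`.
lemma hyp2F1Coeff_succ (a b c : ℝ) (n : ℕ) :
    hyp2F1Coeff a b c (n + 1) =
      hyp2F1Coeff a b c n * ((a + n) * (b + n)) / ((c + n) * (n + 1)) := by
  simp only [hyp2F1Coeff, risingFac_succ, Nat.factorial_succ]
  push_cast
  simp only [div_eq_mul_inv, mul_inv]
  ring

lemma hyp2F1Coeff_pos {a b c : ℝ} (ha : 0 < a) (hb : 0 < b) (hc : 0 < c) (n : ℕ) :
    0 < hyp2F1Coeff a b c n :=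
  div_pos (mul_pos (risingFac_pos ha n) (risingFac_pos hb n))
    (mul_pos (risingFac_pos hc n) (Nat.cast_pos.2 (Nat.factorial_pos n)))

lemma hyp2F1Coeff_mul_pow_eq (a b c z : ℝ) (n : ℕ) :
    hyp2F1Coeff a b c n * z ^ n = ordinaryHypergeometricSeries ℝ a b c n fun _ => z := by
  rw [ordinaryHypergeometricSeries_apply_eq, smul_eq_mul, hyp2F1Coeff,
    risingFac_eq_ascPochhammer_eval, risingFac_eq_ascPochhammer_eval,
    risingFac_eq_ascPochhammer_eval]
  ring

lemma summable_hyp2F1Coeff_mul_pow {a b c z : ℝ} (ha : 0 < a) (hb : 0 < b) (hc : 0 < c)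
    (hz : |z| < 1) : Summable fun n => hyp2F1Coeff a b c n * z ^ n := by
  have hparam : ∀ k : ℕ, (k : ℝ) ≠ -a ∧ (k : ℝ) ≠ -b ∧ (k : ℝ) ≠ -c := fun k => by
    refine ⟨?_, ?_, ?_⟩ <;> intro h <;> linarith [(Nat.cast_nonneg k : (0 : ℝ) ≤ k)]
  have hball : z ∈ Metric.eball (0 : ℝ) (ordinaryHypergeometricSeries ℝ a b c).radius := by
    rw [ordinaryHypergeometricSeries_radius_eq_one ℝ a b c hparam, mem_eball_zero_iff]
    rwa [← ofReal_norm, ENNReal.ofReal_lt_one, Real.norm_eq_abs]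
  simpa only [hyp2F1Coeff_mul_pow_eq] using
    ((ordinaryHypergeometricSeries ℝ a b c).summable_norm_apply hball).of_norm

lemma one_le_hyp2F1 {a b c z : ℝ} (ha : 0 < a) (hb : 0 < b) (hc : 0 < c) (hz₀ : 0 ≤ z)
    (hz₁ : z < 1) : 1 ≤ hyp2F1 a b c z := by
  have hs := summable_hyp2F1Coeff_mul_pow ha hb hc (abs_lt.2 ⟨by linarith, hz₁⟩)
  calc (1 : ℝ) = hyp2F1Coeff a b c 0 * z ^ 0 := by rw [hyp2F1Coeff_zero, pow_zero, one_mul]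
    _ ≤ hyp2F1 a b c z :=
      hs.le_tsum 0 fun n _ => mul_nonneg (hyp2F1Coeff_pos ha hb hc n).le (pow_nonneg hz₀ n)

lemma hyp2F1_monotoneOn {a b c : ℝ} (ha : 0 < a) (hb : 0 < b) (hc : 0 < c) :
    MonotoneOn (hyp2F1 a b c) (Ico 0 1) := by
  rintro x ⟨hx₀, hx₁⟩ y ⟨hy₀, hy₁⟩ hxy
  exact Summable.tsum_le_tsum (fun n => mul_le_mul_of_nonneg_left (pow_le_pow_left₀ hx₀ hxy n)
      (hyp2F1Coeff_pos ha hb hc n).le)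
    (summable_hyp2F1Coeff_mul_pow ha hb hc (abs_lt.2 ⟨by linarith, hx₁⟩))
    (summable_hyp2F1Coeff_mul_pow ha hb hc (abs_lt.2 ⟨by linarith, hy₁⟩))

lemma lt_of_hyp2F1_le_mul {a b c K x z : ℝ} (ha : 0 < a) (hb : 0 < b) (hc : 0 < c)
    (hx : 0 < x) (hz : z ∈ Ioo 0 1) (hKx : K * hyp2F1 a b c (1 - x) < hyp2F1 a b c x)
    (hzK : hyp2F1 a b c z ≤ K * hyp2F1 a b c (1 - z)) : z < x := by
  by_contra! hxz
  obtain ⟨hz₀, hz₁⟩ := hz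
  have hFz := one_le_hyp2F1 ha hb hc hz₀.le hz₁
  have hFz' := one_le_hyp2F1 ha hb hc (z := 1 - z) (by linarith) (by linarith)
  have hK : 0 ≤ K := by nlinarith
  have hmono := hyp2F1_monotoneOn ha hb hc
  have := calc hyp2F1 a b c x
        ≤ hyp2F1 a b c z := hmono ⟨hx.le, by linarith⟩ ⟨hz₀.le, hz₁⟩ hxz
      _ ≤ K * hyp2F1 a b c (1 - z) := hzK
      _ ≤ K * hyp2F1 a b c (1 - x) := mul_le_mul_of_nonneg_left
          (hmono ⟨by linarith, by linarith⟩ ⟨by linarith, by linarith⟩ (by linarith)) hK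
  linarith

lemma tsum_mul_pow_le {c : ℕ → ℝ} (hc : ∀ n, 0 ≤ c n) {x y M : ℝ} (hy : 0 ≤ y) (hyx : y ≤ x)
    (hx₀ : 0 < x) (hx₁ : x ≤ 1) (hs : Summable fun n => c n * x ^ n) (N : ℕ)
    (hM : ∀ n < N, c n ≤ M) :
    ∑' n, c n * y ^ n ≤ N * M + (y / x) ^ N * ∑' n, c n * x ^ n := by
  have hr₀ : 0 ≤ y / x := div_nonneg hy hx₀.le
  have hr₁ : y / x ≤ 1 := (div_le_one hx₀).2 hyx
  have hbound : ∀ n, c n * y ^ n ≤ (if n < N then M else 0) + (y / x) ^ N * (c n * x ^ n) := by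
    intro n
    split_ifs with hn
    · have := mul_le_of_le_one_right (hc n) (pow_le_one₀ hy (hyx.trans hx₁) (n := n))
      have := mul_nonneg (pow_nonneg hr₀ N) (mul_nonneg (hc n) (pow_nonneg hx₀.le n))
      linarith [hM n hn]
    · calc c n * y ^ n = (y / x) ^ n * (c n * x ^ n) := by
            rw [div_pow]; field_simp
        _ ≤ (y / x) ^ N * (c n * x ^ n) :=
            mul_le_mul_of_nonneg_right (pow_le_pow_of_le_one hr₀ hr₁ (not_lt.1 hn))
              (mul_nonneg (hc n) (pow_nonneg hx₀.le n))
        _ = 0 + (y / x) ^ N * (c n * x ^ n) := (zero_add _).symm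
  have hhead : ∀ n ∉ Finset.range N, (if n < N then M else 0) = 0 := fun n hn =>
    if_neg (by simpa using hn)
  have hys : Summable fun n => c n * y ^ n := .of_nonneg_of_le
    (fun n => mul_nonneg (hc n) (pow_nonneg hy n))
    (fun n => mul_le_mul_of_nonneg_left (pow_le_pow_left₀ hy hyx n) (hc n)) hs
  calc ∑' n, c n * y ^ n
      ≤ ∑' n, ((if n < N then M else 0) + (y / x) ^ N * (c n * x ^ n)) :=
        hys.tsum_le_tsum hbound ((summable_of_ne_finset_zero hhead).add (hs.mul_left _))
    _ = N * M + (y / x) ^ N * ∑' n, c n * x ^ n := by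
        rw [Summable.tsum_add (summable_of_ne_finset_zero hhead) (hs.mul_left _), tsum_mul_left,
          tsum_eq_sum hhead, Finset.sum_ite_of_true fun n hn => Finset.mem_range.1 hn,
          Finset.sum_const, Finset.card_range, nsmul_eq_mul]

lemma hyp2F1Coeff_le_succ {a : ℝ} (ha : 1 ≤ a) (n : ℕ) :
    hyp2F1Coeff a (3 * a - 1) (2 * a) n ≤ hyp2F1Coeff a (3 * a - 1) (2 * a) (n + 1) := by
  have hcn := hyp2F1Coeff_pos (by linarith : 0 < a) (by linarith : 0 < 3 * a - 1)
    (by linarith : 0 < 2 * a) n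
  rw [hyp2F1Coeff_succ, le_div_iff₀ (by positivity)]
  exact mul_le_mul_of_nonneg_left (by nlinarith [(Nat.cast_nonneg n : (0 : ℝ) ≤ n)]) hcn.le

lemma mul_hyp2F1Coeff_le {a : ℝ} (ha : 1 ≤ a) (n : ℕ) :
    a * hyp2F1Coeff a (3 * a - 1) (2 * a) n ≤
      2 * (n + 1) * hyp2F1Coeff a (3 * a - 1) (2 * a) (n + 1) := by
  have hcn := hyp2F1Coeff_pos (by linarith : 0 < a) (by linarith : 0 < 3 * a - 1)
    (by linarith : 0 < 2 * a) n
  have hn : (0 : ℝ) ≤ n := Nat.cast_nonneg n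
  have key : a * ((2 * a + n) * (n + 1)) ≤ 2 * (n + 1) * ((a + n) * (3 * a - 1 + n)) := by
    have : a * (2 * a + n) ≤ 2 * ((a + n) * (3 * a - 1 + n)) := by nlinarith
    nlinarith [mul_le_mul_of_nonneg_left this (by positivity : (0 : ℝ) ≤ n + 1)]
  rw [hyp2F1Coeff_succ, mul_div_assoc', le_div_iff₀ (by positivity)]
  nlinarith [mul_le_mul_of_nonneg_left key hcn.le]

lemma mul_hyp2F1Coeff_le_of_lt {a : ℝ} (ha : 1 ≤ a) {n N : ℕ} (hn : n < N) :
    a * hyp2F1Coeff a (3 * a - 1) (2 * a) n ≤ 2 * N * hyp2F1Coeff a (3 * a - 1) (2 * a) N := by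
  obtain ⟨m, rfl⟩ := Nat.exists_eq_add_of_lt hn
  calc a * hyp2F1Coeff a (3 * a - 1) (2 * a) n
      ≤ a * hyp2F1Coeff a (3 * a - 1) (2 * a) (n + m) := mul_le_mul_of_nonneg_left
        (monotone_nat_of_le_succ (hyp2F1Coeff_le_succ ha) (Nat.le_add_right n m)) (by linarith)
    _ ≤ 2 * ((n + m : ℕ) + 1) * hyp2F1Coeff a (3 * a - 1) (2 * a) (n + m + 1) :=
        mul_hyp2F1Coeff_le ha (n + m)
    _ = 2 * ((n + m + 1 : ℕ) : ℝ) * hyp2F1Coeff a (3 * a - 1) (2 * a) (n + m + 1) := by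
        push_cast; ring

lemma hyp2F1_le_mul_hyp2F1 {a x y : ℝ} (ha : 1 ≤ a) (hy : 0 ≤ y) (hyx : y ≤ x) (hx₀ : 0 < x)
    (hx₁ : x < 1) (N : ℕ) :
    hyp2F1 a (3 * a - 1) (2 * a) y ≤
      (2 * N ^ 2 / x ^ N / a + (y / x) ^ N) * hyp2F1 a (3 * a - 1) (2 * a) x := by
  have ha₀ : 0 < a := by linarith
  have hb : 0 < 3 * a - 1 := by linarith
  have hc : 0 < 2 * a := by linarith
  have hpos := hyp2F1Coeff_pos ha₀ hb hc
  have hs := summable_hyp2F1Coeff_mul_pow ha₀ hb hc (abs_lt.2 ⟨by linarith, hx₁⟩)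
  have hcN : hyp2F1Coeff a (3 * a - 1) (2 * a) N ≤ hyp2F1 a (3 * a - 1) (2 * a) x / x ^ N := by
    rw [le_div_iff₀ (pow_pos hx₀ N)]
    exact hs.le_tsum N fun n _ => mul_nonneg (hpos n).le (pow_nonneg hx₀.le n)
  have hM : ∀ n < N, hyp2F1Coeff a (3 * a - 1) (2 * a) n ≤
      2 * N * hyp2F1Coeff a (3 * a - 1) (2 * a) N / a := fun n hn => by
    rw [le_div_iff₀ (by linarith)]
    linarith [mul_hyp2F1Coeff_le_of_lt ha hn]
  calc hyp2F1 a (3 * a - 1) (2 * a) y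
      ≤ N * (2 * N * hyp2F1Coeff a (3 * a - 1) (2 * a) N / a) +
          (y / x) ^ N * hyp2F1 a (3 * a - 1) (2 * a) x :=
        tsum_mul_pow_le (fun n => (hpos n).le) hy hyx hx₀ hx₁.le hs N hM
    _ = 2 * N ^ 2 / a * hyp2F1Coeff a (3 * a - 1) (2 * a) N +
          (y / x) ^ N * hyp2F1 a (3 * a - 1) (2 * a) x := by ring
    _ ≤ 2 * N ^ 2 / a * (hyp2F1 a (3 * a - 1) (2 * a) x / x ^ N) +
          (y / x) ^ N * hyp2F1 a (3 * a - 1) (2 * a) x := by gcongr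
    _ = (2 * N ^ 2 / x ^ N / a + (y / x) ^ N) * hyp2F1 a (3 * a - 1) (2 * a) x := by ring

theorem eventually_mul_hyp2F1_lt (K : ℝ) {x y : ℝ} (hy : 0 ≤ y) (hyx : y < x) (hx : x < 1) :
    ∀ᶠ a in atTop, K * hyp2F1 a (3 * a - 1) (2 * a) y < hyp2F1 a (3 * a - 1) (2 * a) x := by
  have hx₀ : 0 < x := hy.trans_lt hyx
  obtain ⟨N, hN⟩ : ∃ N : ℕ, max K 0 * (y / x) ^ N < 1 := by
    have := ((tendsto_pow_atTop_nhds_zero_of_lt_one (div_nonneg hy hx₀.le)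
      ((div_lt_one hx₀).2 hyx)).const_mul (max K 0))
    rw [mul_zero] at this
    exact (this.eventually (gt_mem_nhds one_pos)).exists
  have hlim : Tendsto (fun a : ℝ => max K 0 * (2 * N ^ 2 / x ^ N / a + (y / x) ^ N)) atTop
      (𝓝 (max K 0 * (y / x) ^ N)) := by
    have := ((tendsto_const_nhds (x := 2 * (N : ℝ) ^ 2 / x ^ N)).div_atTop tendsto_id).add_const
      ((y / x) ^ N) |>.const_mul (max K 0)
    simpa using this
  filter_upwards [hlim.eventually (gt_mem_nhds hN), eventually_ge_atTop 1] with a haK ha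
  have ha₀ : 0 < a := by linarith
  have hb : 0 < 3 * a - 1 := by linarith
  have hc : 0 < 2 * a := by linarith
  have hFy := one_le_hyp2F1 ha₀ hb hc hy (hyx.trans hx)
  have hFx := one_le_hyp2F1 ha₀ hb hc hx₀.le hx
  calc K * hyp2F1 a (3 * a - 1) (2 * a) y
      ≤ max K 0 * hyp2F1 a (3 * a - 1) (2 * a) y :=
        mul_le_mul_of_nonneg_right (le_max_left _ _) (by linarith)
    _ ≤ max K 0 * ((2 * N ^ 2 / x ^ N / a + (y / x) ^ N) * hyp2F1 a (3 * a - 1) (2 * a) x) :=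
        mul_le_mul_of_nonneg_left (hyp2F1_le_mul_hyp2F1 ha hy hyx.le hx₀ hx N)
          (le_max_right _ _)
    _ < 1 * hyp2F1 a (3 * a - 1) (2 * a) x := by
        rw [← mul_assoc]; exact mul_lt_mul_of_pos_right haK (by linarith)
    _ = hyp2F1 a (3 * a - 1) (2 * a) x := one_mul _

lemma Filter.limsup_eq_of_forall_pos {α : Type*} {l : Filter α} [l.NeBot] {f : α → ℝ} {c : ℝ}
    (hbdd : IsBoundedUnder (· ≥ ·) l f) (hlt : ∀ ε > 0, ∀ᶠ x in l, f x < c + ε)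
    (hgt : ∀ ε > 0, ∃ᶠ x in l, c - ε < f x) : limsup f l = c := by
  refine le_antisymm (le_of_forall_pos_le_add fun ε hε => ?_)
    (le_of_forall_pos_le_add fun ε hε => ?_)
  · exact limsup_le_of_le hbdd.isCoboundedUnder_le ((hlt ε hε).mono fun _ => le_of_lt)
  · have := le_limsup_of_frequently_le ((hgt ε hε).mono fun _ => le_of_lt)
      (isBoundedUnder_of_eventually_le ((hlt 1 one_pos).mono fun _ => le_of_lt))
    linarith

lemma frequently_cos_div_eq {C : ℝ} (hC : 0 < C) (θ : ℝ) :
    ∃ᶠ κ in 𝓝[>] (0 : ℝ), Real.cos (C / κ) = Real.cos θ := by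
  have hden : Tendsto (fun m : ℕ => θ + m * (2 * Real.pi)) atTop atTop :=
    tendsto_const_nhds.add_atTop (tendsto_natCast_atTop_atTop.atTop_mul_const (by positivity))
  have hκ : Tendsto (fun m : ℕ => C / (θ + m * (2 * Real.pi))) atTop (𝓝[>] 0) :=
    tendsto_nhdsWithin_iff.2 ⟨tendsto_const_nhds.div_atTop hden,
      (hden.eventually_gt_atTop 0).mono fun m hm => div_pos hC hm⟩
  refine hκ.frequently ((hden.eventually_gt_atTop 0).frequently.mono fun m hm => ?_)
  rw [div_div_cancel₀ hC.ne', Real.cos_add_nat_mul_two_pi]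

lemma tendsto_four_div_nhdsGT_zero : Tendsto (fun κ : ℝ => 4 / κ) (𝓝[>] 0) atTop := by
  simpa only [div_eq_mul_inv] using tendsto_inv_nhdsGT_zero.const_mul_atTop four_pos

lemma eventually_lt_half_add (K : ℝ) {ε : ℝ} (hε : 0 < ε) :
    ∀ᶠ κ in 𝓝[>] (0 : ℝ), ∀ z ∈ Ioo (0 : ℝ) 1, ∀ c ≤ K,
      hyp2F1 (4/κ) (12/κ - 1) (8/κ) z = c * hyp2F1 (4/κ) (12/κ - 1) (8/κ) (1 - z) →
        z < 1/2 + ε := by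
  rcases le_or_gt (1/2) ε with hε₂ | hε₂
  · exact Eventually.of_forall fun _ z hz _ _ _ => by linarith [hz.2]
  have hlarge := eventually_mul_hyp2F1_lt K (x := 1/2 + ε) (y := 1/2 - ε)
    (by linarith) (by linarith) (by linarith)
  filter_upwards [tendsto_four_div_nhdsGT_zero.eventually hlarge,
    tendsto_four_div_nhdsGT_zero.eventually (eventually_ge_atTop 1)] with κ hK ha z hz c hc heq
  rw [show 12/κ - 1 = 3 * (4/κ) - 1 by ring, show 8/κ = 2 * (4/κ) by ring] at heq
  have hF := one_le_hyp2F1 (by linarith : 0 < 4/κ) (by linarith : 0 < 3 * (4/κ) - 1)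
    (by linarith : 0 < 2 * (4/κ)) (z := 1 - z) (by linarith [hz.2]) (by linarith [hz.1])
  refine lt_of_hyp2F1_le_mul (by linarith) (by linarith) (by linarith) (by linarith) hz ?_
    (heq.trans_le (mul_le_mul_of_nonneg_right hc (by linarith)))
  rwa [show 1 - (1/2 + ε) = 1/2 - ε by ring]

/-- let `ζ : (0,8/3] → [0,1)` be given by `ζ(κ) = z(κ)` (the unique
solution of `₂F₁(4/κ,12/κ−1,8/κ;z) = 2cos(4π/κ)·₂F₁(4/κ,12/κ−1,8/κ;1−z)` in `(0,1)`)
when `cos(4π/κ) > 0`, and `ζ(κ) = 0` when `cos(4π/κ) ≤ 0`. Then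
`limsup_{κ→0⁺} ζ(κ) = 1/2` and `liminf_{κ→0⁺} ζ(κ) = 0`. -/
theorem statement17 (ζ : ℝ → ℝ)
    (hζpos : ∀ κ ∈ Set.Ioc (0:ℝ) (8/3), 0 < Real.cos (4 * Real.pi / κ) →
      ζ κ ∈ Set.Ioo (0:ℝ) 1 ∧
        hyp2F1 (4/κ) (12/κ - 1) (8/κ) (ζ κ)
          = 2 * Real.cos (4 * Real.pi / κ) * hyp2F1 (4/κ) (12/κ - 1) (8/κ) (1 - ζ κ))
    (hζnonpos : ∀ κ ∈ Set.Ioc (0:ℝ) (8/3), Real.cos (4 * Real.pi / κ) ≤ 0 → ζ κ = 0) :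
    Filter.limsup ζ (nhdsWithin 0 (Set.Ioi 0)) = 1/2 ∧
    Filter.liminf ζ (nhdsWithin 0 (Set.Ioi 0)) = 0 := by
  have hsmall : ∀ᶠ κ in 𝓝[>] (0 : ℝ), κ ∈ Ioc 0 (8/3) := Ioc_mem_nhdsGT (by norm_num)
  have hnonneg : ∀ᶠ κ in 𝓝[>] (0 : ℝ), 0 ≤ ζ κ := hsmall.mono fun κ hκ => by
    rcases le_or_gt (Real.cos (4 * Real.pi / κ)) 0 with hc | hc
    · exact (hζnonpos κ hκ hc).ge
    · exact (hζpos κ hκ hc).1.1.le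
  have hupper : ∀ ε > 0, ∀ᶠ κ in 𝓝[>] (0 : ℝ), ζ κ < 1/2 + ε := fun ε hε => by
    filter_upwards [hsmall, eventually_lt_half_add 2 hε] with κ hκ hroot
    rcases le_or_gt (Real.cos (4 * Real.pi / κ)) 0 with hc | hc
    · rw [hζnonpos κ hκ hc]; linarith
    · obtain ⟨hz, heq⟩ := hζpos κ hκ hc
      exact hroot _ hz _ (by linarith [Real.cos_le_one (4 * Real.pi / κ)]) heq
  have hlower : ∀ ε > 0, ∃ᶠ κ in 𝓝[>] (0 : ℝ), 1/2 - ε < ζ κ := fun ε hε => by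
    refine ((frequently_cos_div_eq (C := 4 * Real.pi) (by positivity) 0).and_eventually
      (hsmall.and (eventually_lt_half_add 2 hε))).mono ?_
    rintro κ ⟨hcos, hκ, hroot⟩
    rw [Real.cos_zero] at hcos
    obtain ⟨hz, heq⟩ := hζpos κ hκ (by rw [hcos]; norm_num)
    have := hroot (1 - ζ κ) ⟨by linarith [hz.2], by linarith [hz.1]⟩ (1/2) (by norm_num)
      (by rw [sub_sub_cancel, heq, hcos]; ring)
    linarith
  have hzero : ∃ᶠ κ in 𝓝[>] (0 : ℝ), ζ κ ≤ 0 := by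
    refine ((frequently_cos_div_eq (C := 4 * Real.pi) (by positivity) Real.pi).and_eventually
      hsmall).mono fun κ ⟨hcos, hκ⟩ => ?_
    exact (hζnonpos κ hκ (by rw [hcos, Real.cos_pi]; norm_num)).le
  have hbdd := isBoundedUnder_of_eventually_ge hnonneg
  exact ⟨limsup_eq_of_forall_pos hbdd hupper hlower,
    le_antisymm (liminf_le_of_frequently_le hzero hbdd) (le_liminf_of_le
      (isCoboundedUnder_ge_of_eventually_le _ ((hupper 1 one_pos).mono fun _ => le_of_lt)) hnonneg)⟩
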